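/- arXiv:2602.00889 — 2 statements merged into one kernel-verified Lean document; each statement's English description precedes it below -/
import Mathlib

section
/- Let d ≥ 1, let X ⊆ ℝ^d be open, let T > 0, let θ, θ' > 0 and let f, f' : X → ℝ. Suppose u : X × (0,T) → ℝ is strictly positive, twice continuously differentiable in the space variable and twice continuously differentiable in the time variable, and satisfies both ∂_t u = (θ/2)Δ_x u − f u and ∂_t u = (θ'/2)Δ_x u − f' u on X × (0,T). If there exists a point (x₀,t₀) ∈ X × (0,T) with ∂_t²(log u)(x₀,t₀) ≠ 0, then θ = θ' and f = f' on X. (Identifiability of the pair (θ,f) from the solution of the heat equation with absorption.) -/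
open MeasureTheory Real Filter

noncomputable section

/-- Partial derivative in the `i`-th spatial coordinate. -/
def pder {d : ℕ} (i : Fin d) (v : (Fin d → ℝ) → ℝ) : (Fin d → ℝ) → ℝ :=
  fun x => deriv (fun s => v (Function.update x i s)) (x i)

/-- Spatial Laplacian `Δ_x = ∑ᵢ ∂²/∂xᵢ²`. -/
def lap {d : ℕ} (v : (Fin d → ℝ) → ℝ) : (Fin d → ℝ) → ℝ :=
  fun x => ∑ i : Fin d, pder i (pder i v) x

/-- Multi-index spatial derivative `∂^j`. -/
def mder {d : ℕ} (j : Fin d → ℕ) (v : (Fin d → ℝ) → ℝ) : (Fin d → ℝ) → ℝ :=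
  (List.finRange d).foldr (fun i acc => (pder i)^[j i] acc) v

/-- `ℤ^d`-periodicity of a function on `ℝ^d`. -/
def ZPer {d : ℕ} (F : (Fin d → ℝ) → ℝ) : Prop :=
  ∀ (x : Fin d → ℝ) (k : Fin d → ℤ), F (fun i => x i + (k i : ℝ)) = F x

/-- `ℤ^d`-periodicity in the space variable. -/
def ZPerSpace {d : ℕ} (u : (Fin d → ℝ) → ℝ → ℝ) : Prop :=
  ∀ t : ℝ, ZPer fun x => u x t

/-- The fundamental domain `[0,1]^d` of the torus. -/
def unitCube (d : ℕ) : Set (Fin d → ℝ) := Set.Icc 0 1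

/-- `L²`-norm on the torus. -/
def l2T {d : ℕ} (F : (Fin d → ℝ) → ℝ) : ℝ :=
  Real.sqrt (∫ x in unitCube d, (F x) ^ 2)

/-- `L²`-norm on `Q = 𝕋^d × (0,T)`. -/
def l2Q {d : ℕ} (T : ℝ) (u : (Fin d → ℝ) → ℝ → ℝ) : ℝ :=
  Real.sqrt (∫ t in Set.Ioc (0 : ℝ) T, ∫ x in unitCube d, (u x t) ^ 2)

/-- Supremum norm over space. -/
def supT {d : ℕ} (F : (Fin d → ℝ) → ℝ) : ℝ := ⨆ x, |F x|

/-- Supremum norm over `𝕋^d × [0,T]`. -/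
def supQ {d : ℕ} (T : ℝ) (u : (Fin d → ℝ) → ℝ → ℝ) : ℝ :=
  ⨆ x, ⨆ t ∈ Set.Icc (0 : ℝ) T, |u x t|

/-- Squared Sobolev `H^β`-norm on the torus:  `∑_{|j| ≤ β} ‖∂^j F‖²_{L²(𝕋^d)}`. -/
def hSobSq {d : ℕ} (β : ℕ) (F : (Fin d → ℝ) → ℝ) : ℝ :=
  ∑ j ∈ Finset.univ.filter (fun j : Fin d → Fin (β + 1) => (∑ i, (j i : ℕ)) ≤ β),
    ∫ x in unitCube d, (mder (fun i => (j i : ℕ)) F x) ^ 2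

/-- Sobolev `H^β`-norm on the torus. -/
def hSob {d : ℕ} (β : ℕ) (F : (Fin d → ℝ) → ℝ) : ℝ := Real.sqrt (hSobSq β F)

/-- Squared parabolic Sobolev `H^{2,1}(Q)`-norm. -/
def h21Sq {d : ℕ} (T : ℝ) (u : (Fin d → ℝ) → ℝ → ℝ) : ℝ :=
  (∫ t in Set.Ioc (0 : ℝ) T,
      ∑ j ∈ Finset.univ.filter (fun j : Fin d → Fin 3 => (∑ i, (j i : ℕ)) ≤ 2),
        ∫ x in unitCube d, (mder (fun i => (j i : ℕ)) (fun y => u y t) x) ^ 2)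
    + ∫ x in unitCube d, ∫ t in Set.Ioc (0 : ℝ) T, ((u x t) ^ 2 + (deriv (u x) t) ^ 2)

/-- Parabolic Sobolev `H^{2,1}(Q)`-norm. -/
def h21 {d : ℕ} (T : ℝ) (u : (Fin d → ℝ) → ℝ → ℝ) : ℝ := Real.sqrt (h21Sq T u)

/-- Smoothness of a function of space and time. -/
def SmoothQ {d : ℕ} (u : (Fin d → ℝ) → ℝ → ℝ) : Prop :=
  ContDiff ℝ (⊤ : ℕ∞) fun p : (Fin d → ℝ) × ℝ => u p.1 p.2

/-- A smooth classical solution of the heat equation with absorption `f`,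
diffusivity `θ` and initial value `u0`. -/
def HeatSol {d : ℕ} (T θ : ℝ) (f u0 : (Fin d → ℝ) → ℝ) (u : (Fin d → ℝ) → ℝ → ℝ) : Prop :=
  SmoothQ u ∧ ZPerSpace u ∧
    (∀ (x : Fin d → ℝ), ∀ t ∈ Set.Ioc (0 : ℝ) T,
      deriv (u x) t = θ / 2 * lap (fun y => u y t) x - f x * u x t) ∧
    ∀ x, u x 0 = u0 x

/-- A smooth solution of the inhomogeneous problem with forcing `g` and
zero initial value (`v = 𝓛_{θ,f}⁻¹ g`). -/
def InhomSol {d : ℕ} (T θ : ℝ) (f : (Fin d → ℝ) → ℝ) (g v : (Fin d → ℝ) → ℝ → ℝ) : Prop :=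
  SmoothQ v ∧ ZPerSpace v ∧
    (∀ (x : Fin d → ℝ), ∀ t ∈ Set.Ioc (0 : ℝ) T,
      deriv (v x) t = θ / 2 * lap (fun y => v y t) x - f x * v x t + g x t) ∧
    ∀ x, v x 0 = 0

/-- A link function: a smooth function `Φ : ℝ → (fmin, ∞)` with strictly positive
derivative and all derivatives bounded. -/
structure LinkFun where
  toFun : ℝ → ℝ
  fmin : ℝ
  fmin_pos : 0 < fmin
  smooth : ContDiff ℝ (⊤ : ℕ∞) toFun
  gt_fmin : ∀ x, fmin < toFun x
  deriv_pos : ∀ x, 0 < deriv toFun x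
  derivs_bdd : ∀ n : ℕ, 1 ≤ n → ∃ C, ∀ x, |iteratedDeriv n toFun x| ≤ C

/-- The linearized solution `I_{θ,F} h` in direction `h`, associated with a solution `u`. -/
def LinSol {d : ℕ} (T θ : ℝ) (Φ : LinkFun) (F h : (Fin d → ℝ) → ℝ)
    (u z : (Fin d → ℝ) → ℝ → ℝ) : Prop :=
  SmoothQ z ∧ ZPerSpace z ∧
    (∀ (x : Fin d → ℝ), ∀ t ∈ Set.Ioc (0 : ℝ) T,
      deriv (z x) t = θ / 2 * lap (fun y => z y t) x - Φ.toFun (F x) * z x t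
        + h x * deriv Φ.toFun (F x) * u x t) ∧
    ∀ x, z x 0 = 0

/-- The `θ`-derivative solution `K̇_θ F`, associated with a solution `u`. -/
def ThetaDerivSol {d : ℕ} (T θ : ℝ) (Φ : LinkFun) (F : (Fin d → ℝ) → ℝ)
    (u w : (Fin d → ℝ) → ℝ → ℝ) : Prop :=
  SmoothQ w ∧ ZPerSpace w ∧
    (∀ (x : Fin d → ℝ), ∀ t ∈ Set.Ioc (0 : ℝ) T,
      deriv (w x) t = θ / 2 * lap (fun y => w y t) x - Φ.toFun (F x) * w x t
        + 1 / 2 * lap (fun y => u y t) x) ∧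
    ∀ x, w x 0 = 0

/-- Dual Sobolev norm `‖G‖_{(H²)*}` on the torus. -/
def h2dual {d : ℕ} (G : (Fin d → ℝ) → ℝ) : ℝ :=
  sSup {r : ℝ | ∃ g : (Fin d → ℝ) → ℝ, ContDiff ℝ (⊤ : ℕ∞) g ∧ ZPer g ∧ hSob 2 g ≤ 1 ∧
    r = |∫ x in unitCube d, G x * g x|}

end

/-- identifiability of the pair `(θ, f)` from a positive solution of the
heat equation with absorption, provided `∂_t² log u ≠ 0` somewhere. -/
theorem identifiability {d : ℕ} (hd : 1 ≤ d) (X : Set (Fin d → ℝ)) (hX : IsOpen X)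
    (T : ℝ) (hT : 0 < T) (θ θ' : ℝ) (hθ : 0 < θ) (hθ' : 0 < θ')
    (f f' : (Fin d → ℝ) → ℝ) (u : (Fin d → ℝ) → ℝ → ℝ)
    (hpos : ∀ x ∈ X, ∀ t ∈ Set.Ioo (0 : ℝ) T, 0 < u x t)
    (hregx : ∀ t ∈ Set.Ioo (0 : ℝ) T, ContDiffOn ℝ 2 (fun x => u x t) X)
    (hregt : ∀ x ∈ X, ContDiffOn ℝ 2 (u x) (Set.Ioo 0 T))
    (hpde : ∀ x ∈ X, ∀ t ∈ Set.Ioo (0 : ℝ) T,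
      deriv (u x) t = θ / 2 * lap (fun y => u y t) x - f x * u x t)
    (hpde' : ∀ x ∈ X, ∀ t ∈ Set.Ioo (0 : ℝ) T,
      deriv (u x) t = θ' / 2 * lap (fun y => u y t) x - f' x * u x t)
    (hlog : ∃ x₀ ∈ X, ∃ t₀ ∈ Set.Ioo (0 : ℝ) T,
      deriv (deriv fun s => Real.log (u x₀ s)) t₀ ≠ 0) :
    θ = θ' ∧ ∀ x ∈ X, f x = f' x := by
  obtain ⟨x₀, hx₀, t₀, ht₀, hlog2⟩ := hlog
  have key : ∀ x ∈ X, ∀ t ∈ Set.Ioo (0:ℝ) T,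
      (θ - θ') / 2 * lap (fun y => u y t) x = (f x - f' x) * u x t := by
    intro x hx t ht
    have h1 := hpde x hx t ht
    have h2 := hpde' x hx t ht
    nlinarith [h1, h2]
  have hθeq : θ = θ' := by
    by_contra hne
    have hsub : θ - θ' ≠ 0 := sub_ne_zero.mpr hne
    set k := θ * (f x₀ - f' x₀) / (θ - θ') - f x₀ with hk
    have hder : ∀ t ∈ Set.Ioo (0:ℝ) T, deriv (u x₀) t = k * u x₀ t := by
      intro t ht
      have h1 := hpde x₀ hx₀ t ht
      have h3 := key x₀ hx₀ t ht
      have hl : lap (fun y => u y t) x₀ = 2 * (f x₀ - f' x₀) * u x₀ t / (θ - θ') := by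
        field_simp
        nlinarith [h3]
      rw [hl] at h1
      rw [h1, hk]
      field_simp
    have hlogderiv : ∀ t ∈ Set.Ioo (0:ℝ) T,
        deriv (fun s => Real.log (u x₀ s)) t = k := by
      intro t ht
      have hdiff : DifferentiableAt ℝ (u x₀) t :=
        ((hregt x₀ hx₀).contDiffAt (isOpen_Ioo.mem_nhds ht)).differentiableAt (by norm_num)
      have hpos' := hpos x₀ hx₀ t ht
      have hd := (hdiff.hasDerivAt.log hpos'.ne').deriv
      rw [hd, hder t ht, mul_div_assoc, div_self hpos'.ne', mul_one]
    have hev : (deriv fun s => Real.log (u x₀ s)) =ᶠ[nhds t₀] fun _ => k :=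
      Filter.eventuallyEq_of_mem (isOpen_Ioo.mem_nhds ht₀) (fun t ht => hlogderiv t ht)
    have hzero : deriv (deriv fun s => Real.log (u x₀ s)) t₀ = 0 := by
      rw [hev.deriv_eq, deriv_const]
    exact hlog2 hzero
  refine ⟨hθeq, fun x hx => ?_⟩
  have h3 := key x hx t₀ ht₀
  have hpos' := hpos x hx t₀ ht₀
  rw [hθeq, sub_self, zero_div, zero_mul] at h3
  have := mul_eq_zero.mp h3.symm
  rcases this with h | h
  · linarith [sub_eq_zero.mp h]
  · exact absurd h hpos'.ne'
end

section
/- Let d ≥ 1, T > 0, θ > 0, and let A, B, f : ℝ^d → ℝ be ℤ^d-periodic with A and B twice continuously differentiable and B(x) > 0 for every x. If the function u(x,t) := B(x)e^{tA(x)} satisfies ∂_t u = (θ/2)Δ_x u − f u on ℝ^d × (0,T), then A is constant. (Key step in the proof of Theorem 'Information Theorem' part (i): the coefficient of t² in the resulting polynomial identity in t forces |∇A|² ≡ 0.) -/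
open MeasureTheory Real Filter

/-!
Along each coordinate line, `∂ᵢ²(B e^{tA}) = e^{tA} (∂ᵢ²B + t (2 ∂ᵢB ∂ᵢA + B ∂ᵢ²A) + t² B (∂ᵢA)²)`.
After dividing by `e^{tA(x)}`, the equation at a fixed `x` becomes a polynomial identity of degree
two in `t` on `(0, T)`, so its `t²`-coefficient `(θ/2) B(x) |∇A(x)|²` vanishes. As `B > 0`, every
partial derivative of `A` vanishes everywhere, hence `A` is constant.
-/

open Finset

theorem deriv_deriv_mul_exp_mul {φ ψ : ℝ → ℝ} (hφ : ContDiff ℝ 2 φ) (hψ : ContDiff ℝ 2 ψ)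
    (t s : ℝ) :
    deriv (deriv fun r => φ r * exp (t * ψ r)) s =
      exp (t * ψ s) * (deriv (deriv φ) s + t * (2 * deriv φ s * deriv ψ s
        + φ s * deriv (deriv ψ) s) + t ^ 2 * (φ s * deriv ψ s ^ 2)) := by
  have hφ' : Differentiable ℝ φ := hφ.differentiable two_ne_zero
  have hψ' : Differentiable ℝ ψ := hψ.differentiable two_ne_zero
  have hφ'' : Differentiable ℝ (deriv φ) := hφ.differentiable_deriv_two
  have hψ'' : Differentiable ℝ (deriv ψ) := hψ.differentiable_deriv_two
  have hexp (r : ℝ) : HasDerivAt (fun r => exp (t * ψ r)) (exp (t * ψ r) * (t * deriv ψ r)) r :=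
    ((hψ' r).hasDerivAt.const_mul t).exp
  have h₁ : deriv (fun r => φ r * exp (t * ψ r)) =
      fun r => deriv φ r * exp (t * ψ r) + φ r * (exp (t * ψ r) * (t * deriv ψ r)) :=
    funext fun r => ((hφ' r).hasDerivAt.mul (hexp r)).deriv
  rw [h₁, (((hφ'' s).hasDerivAt.fun_mul (hexp s)).fun_add
    ((hφ' s).hasDerivAt.fun_mul ((hexp s).fun_mul ((hψ'' s).hasDerivAt.const_mul t)))).deriv]
  ring

section Coordinates

variable {d : ℕ}

theorem pder_pder_eq_deriv_deriv (i : Fin d) (v : (Fin d → ℝ) → ℝ) (x : Fin d → ℝ) :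
    pder i (pder i v) x = deriv (deriv fun s => v (Function.update x i s)) (x i) := by
  simp only [pder, Function.update_idem, Function.update_self]

theorem pder_eq_fderiv_apply_single {v : (Fin d → ℝ) → ℝ} {x : Fin d → ℝ}
    (hv : DifferentiableAt ℝ v x) (i : Fin d) :
    pder i v x = fderiv ℝ v x (Pi.single i 1) := by
  have hv' : HasFDerivAt v (fderiv ℝ v x) (Function.update x i (x i)) := by
    rw [Function.update_eq_self]
    exact hv.hasFDerivAt
  exact (hv'.comp_hasDerivAt (x i) (hasDerivAt_update x i (x i))).deriv

theorem eq_of_pder_eq_zero {v : (Fin d → ℝ) → ℝ} (hv : Differentiable ℝ v)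
    (h : ∀ x i, pder i v x = 0) (x y : Fin d → ℝ) : v x = v y := by
  refine is_const_of_fderiv_eq_zero hv (fun z => ?_) x y
  refine ContinuousLinearMap.coe_injective ((Pi.basisFun ℝ (Fin d)).ext fun i => ?_)
  simp [← pder_eq_fderiv_apply_single (hv z), h]

theorem lap_mul_exp_mul {A B : (Fin d → ℝ) → ℝ} (hA : ContDiff ℝ 2 A) (hB : ContDiff ℝ 2 B)
    (t : ℝ) (x : Fin d → ℝ) :
    lap (fun y => B y * exp (t * A y)) x =
      exp (t * A x) * (lap B x + t * ∑ i, (2 * pder i B x * pder i A x + B x * pder i (pder i A) x)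
        + t ^ 2 * (B x * ∑ i, pder i A x ^ 2)) := by
  have hslice (i : Fin d) : pder i (pder i fun y => B y * exp (t * A y)) x = exp (t * A x) *
      (pder i (pder i B) x + t * (2 * pder i B x * pder i A x + B x * pder i (pder i A) x)
        + t ^ 2 * (B x * pder i A x ^ 2)) := by
    have hBi : ContDiff ℝ 2 fun s => B (Function.update x i s) := hB.comp (contDiff_update 2 x i)
    have hAi : ContDiff ℝ 2 fun s => A (Function.update x i s) := hA.comp (contDiff_update 2 x i)
    simp only [pder_pder_eq_deriv_deriv]
    rw [deriv_deriv_mul_exp_mul hBi hAi]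
    simp only [pder, Function.update_eq_self]
  simp only [lap, hslice, ← mul_sum, sum_add_distrib]

end Coordinates

theorem coeff_two_eq_zero_of_quadratic_eq_zero_on_Ioo {a b c₀ c₁ c₂ : ℝ} (hab : a < b)
    (h : ∀ t ∈ Set.Ioo a b, c₀ + c₁ * t + c₂ * t ^ 2 = 0) : c₂ = 0 := by
  have h₁ := h ((3 * a + b) / 4) ⟨by linarith, by linarith⟩
  have h₂ := h ((a + b) / 2) ⟨by linarith, by linarith⟩
  have h₃ := h ((a + 3 * b) / 4) ⟨by linarith, by linarith⟩
  -- second difference with step `(b - a) / 4`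
  have : (b - a) ^ 2 * c₂ = 0 := by linear_combination 8 * h₁ - 16 * h₂ + 8 * h₃
  simpa [(sub_pos.mpr hab).ne'] using this

theorem exponential_solution_constant_exponent_general {d : ℕ} (T θ : ℝ)
    (hT : 0 < T) (hθ : 0 < θ) (A B f : (Fin d → ℝ) → ℝ)
    (hA : ContDiff ℝ 2 A) (hB : ContDiff ℝ 2 B) (hBpos : ∀ x, 0 < B x)
    (hpde : ∀ (x : Fin d → ℝ), ∀ t ∈ Set.Ioo (0 : ℝ) T,
      deriv (fun s : ℝ => B x * Real.exp (s * A x)) t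
        = θ / 2 * lap (fun y => B y * Real.exp (t * A y)) x
          - f x * (B x * Real.exp (t * A x))) :
    ∀ x y, A x = A y := by
  refine eq_of_pder_eq_zero (hA.differentiable two_ne_zero) fun x i => ?_
  have hquad : ∀ t ∈ Set.Ioo 0 T,
      (θ / 2 * lap B x - f x * B x - B x * A x)
        + θ / 2 * (∑ i, (2 * pder i B x * pder i A x + B x * pder i (pder i A) x)) * t
        + θ / 2 * (B x * ∑ i, pder i A x ^ 2) * t ^ 2 = 0 := by
    intro t ht
    have hdt : HasDerivAt (fun s => B x * exp (s * A x)) (B x * (exp (t * A x) * A x)) t :=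
      ((hasDerivAt_mul_const (A x)).exp).const_mul (B x)
    have h := hpde x t ht
    rw [hdt.deriv, lap_mul_exp_mul hA hB] at h
    refine (mul_eq_zero_iff_right (exp_pos (t * A x)).ne').mp ?_
    linear_combination -h
  have hgrad : ∑ i, pder i A x ^ 2 = 0 := by
    simpa [hθ.ne', (hBpos x).ne'] using coeff_two_eq_zero_of_quadratic_eq_zero_on_Ioo hT hquad
  exact pow_eq_zero_iff two_ne_zero |>.mp <|
    (sum_eq_zero_iff_of_nonneg fun j _ => sq_nonneg (pder j A x)).mp hgrad i (mem_univ i)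

/-- if `u(x,t) = B(x) e^{t A(x)}` solves the heat equation with absorption,
then `A` is constant. -/
theorem exponential_solution_constant_exponent {d : ℕ} (hd : 1 ≤ d) (T θ : ℝ)
    (hT : 0 < T) (hθ : 0 < θ) (A B f : (Fin d → ℝ) → ℝ)
    (hAper : ZPer A) (hBper : ZPer B) (hfper : ZPer f)
    (hA : ContDiff ℝ 2 A) (hB : ContDiff ℝ 2 B) (hBpos : ∀ x, 0 < B x)
    (hpde : ∀ (x : Fin d → ℝ), ∀ t ∈ Set.Ioo (0 : ℝ) T,
      deriv (fun s : ℝ => B x * Real.exp (s * A x)) t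
        = θ / 2 * lap (fun y => B y * Real.exp (t * A y)) x
          - f x * (B x * Real.exp (t * A x))) :
    ∀ x y, A x = A y :=
  exponential_solution_constant_exponent_general T θ hT hθ A B f hA hB hBpos hpde
end
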